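/- For a parameterized Markov chain on a nonempty finite state space S, the family of communicating classes is laminar: for any two communicating classes B and B', either B ∩ B' = ∅, or B ⊆ B', or B' ⊆ B. -/
import Mathlib

open scoped BigOperators Classical
open Filter

/-- Iterates whose supremum is the reachability probability. -/
noncomputable def reachAux {S : Type*} [Fintype S]
    (P : S → S → ℝ) (t : S) : ℕ → S → ℝ
  | 0, x => if x = t then 1 else 0
  | n + 1, x => if x = t then 1 else ∑ y, P x y * reachAux P t n y

/-- Reachability probability of target `t` starting from `s` in the Markov chain `P`. -/
noncomputable def ReachProb {S : Type*} [Fintype S]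
    (P : S → S → ℝ) (t s : S) : ℝ :=
  ⨆ n : ℕ, reachAux P t n s

/-- Iterates whose supremum is the probability of leaving `B` strictly before
visiting `s'`. -/
noncomputable def exitBeforeAux {S : Type*} [Fintype S]
    (P : S → S → ℝ) (B : Set S) (s' : S) : ℕ → S → ℝ
  | 0, x => if x ∉ B then 1 else 0
  | n + 1, x => if x ∉ B then 1 else if x = s' then 0
      else ∑ y, P x y * exitBeforeAux P B s' n y

/-- Probability of leaving `B` strictly before visiting `s'`, starting from `s`. -/
noncomputable def ExitBefore {S : Type*} [Fintype S]
    (P : S → S → ℝ) (B : Set S) (s' s : S) : ℝ :=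
  ⨆ n : ℕ, exitBeforeAux P B s' n s

/-- A communicating class of a parameterized Markov chain `P`. -/
def IsCommClass {S : Type*} [Fintype S] (P : ℝ → S → S → ℝ) (B : Set S) : Prop :=
  B.Nonempty ∧ ∀ s ∈ B, ∀ s' ∈ B,
    Tendsto (fun ε => ExitBefore (P ε) B s' s) (nhdsWithin 0 (Set.Ioi 0)) (nhds 0) ∧
    Tendsto (fun ε => ReachProb (P ε) s' s) (nhdsWithin 0 (Set.Ioi 0)) (nhds 1)

section Aux

variable {S : Type*} [Fintype S]

/-- Probability of visiting `a` weakly before visiting `t`, and visiting `t`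
within `n` steps. -/
noncomputable def uAux (Q : S → S → ℝ) (a t : S) : ℕ → S → ℝ
  | 0, x => if x = a then (if x = t then 1 else 0) else 0
  | n + 1, x => if x = a then reachAux Q t (n + 1) x
      else if x = t then 0 else ∑ y, Q x y * uAux Q a t n y

variable {Q : S → S → ℝ}

lemma reachAux_nonneg (h0 : ∀ s s', 0 ≤ Q s s') (t : S) : ∀ n x, 0 ≤ reachAux Q t n x := by
  intro n
  induction n with
  | zero => intro x; simp only [reachAux]; split <;> norm_num
  | succ n ih =>
    intro x
    simp only [reachAux]
    split
    · norm_num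
    · exact Finset.sum_nonneg fun y _ => mul_nonneg (h0 x y) (ih y)

lemma reachAux_le_one (h0 : ∀ s s', 0 ≤ Q s s') (h1 : ∀ s, (∑ s', Q s s') = 1) (t : S) : ∀ n x, reachAux Q t n x ≤ 1 := by
  intro n
  induction n with
  | zero => intro x; simp only [reachAux]; split <;> norm_num
  | succ n ih =>
    intro x
    simp only [reachAux]
    split
    · exact le_rfl
    · calc (∑ y, Q x y * reachAux Q t n y) ≤ ∑ y, Q x y * 1 :=
            Finset.sum_le_sum fun y _ => mul_le_mul_of_nonneg_left (ih y) (h0 x y)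
        _ = 1 := by simp [h1 x]

lemma exitBeforeAux_nonneg (h0 : ∀ s s', 0 ≤ Q s s') (B : Set S) (a : S) : ∀ n x, 0 ≤ exitBeforeAux Q B a n x := by
  intro n
  induction n with
  | zero => intro x; simp only [exitBeforeAux]; split <;> norm_num
  | succ n ih =>
    intro x
    simp only [exitBeforeAux]
    split
    · norm_num
    · split
      · norm_num
      · exact Finset.sum_nonneg fun y _ => mul_nonneg (h0 x y) (ih y)

lemma exitBeforeAux_le_one (h0 : ∀ s s', 0 ≤ Q s s') (h1 : ∀ s, (∑ s', Q s s') = 1) (B : Set S) (a : S) : ∀ n x, exitBeforeAux Q B a n x ≤ 1 := by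
  intro n
  induction n with
  | zero => intro x; simp only [exitBeforeAux]; split <;> norm_num
  | succ n ih =>
    intro x
    simp only [exitBeforeAux]
    split
    · exact le_rfl
    · split
      · norm_num
      · calc (∑ y, Q x y * exitBeforeAux Q B a n y) ≤ ∑ y, Q x y * 1 :=
              Finset.sum_le_sum fun y _ => mul_le_mul_of_nonneg_left (ih y) (h0 x y)
          _ = 1 := by simp [h1 x]

lemma uAux_nonneg (h0 : ∀ s s', 0 ≤ Q s s') (a t : S) : ∀ n x, 0 ≤ uAux Q a t n x := by
  intro n
  induction n with
  | zero => intro x; simp only [uAux]; split <;> [skip; norm_num]; split <;> norm_num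
  | succ n ih =>
    intro x
    simp only [uAux]
    split
    · exact reachAux_nonneg h0 t _ _
    · split
      · norm_num
      · exact Finset.sum_nonneg fun y _ => mul_nonneg (h0 x y) (ih y)

lemma uAux_le_one (h0 : ∀ s s', 0 ≤ Q s s') (h1 : ∀ s, (∑ s', Q s s') = 1) (a t : S) : ∀ n x, uAux Q a t n x ≤ 1 := by
  intro n
  induction n with
  | zero => intro x; simp only [uAux]; split <;> [skip; norm_num]; split <;> norm_num
  | succ n ih =>
    intro x
    simp only [uAux]
    split
    · exact reachAux_le_one h0 h1 t _ _
    · split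
      · norm_num
      · calc (∑ y, Q x y * uAux Q a t n y) ≤ ∑ y, Q x y * 1 :=
              Finset.sum_le_sum fun y _ => mul_le_mul_of_nonneg_left (ih y) (h0 x y)
          _ = 1 := by simp [h1 x]

/-- If the chain starts at `x ≠ a` with `a ≠ x`'s... value of u at the "other" anchor. -/
lemma uAux_at_t {a t : S} (hat : a ≠ t) : ∀ n, uAux Q a t n t = 0 := by
  intro n
  cases n with
  | zero => simp [uAux, hat.symm]
  | succ n => simp [uAux, hat.symm]

/-- Key decomposition: reaching `t ∉ C` requires either exiting `C` strictly before
visiting `a`, or visiting `a` weakly before `t`. -/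
lemma reachAux_le_exit_add_u (h0 : ∀ s s', 0 ≤ Q s s') (h1 : ∀ s, (∑ s', Q s s') = 1) (C : Set S) (a t : S) (ht : t ∉ C) :
    ∀ n x, reachAux Q t n x ≤ exitBeforeAux Q C a n x + uAux Q a t n x := by
  intro n
  induction n with
  | zero =>
    intro x
    by_cases hx : x ∈ C
    · have hxt : x ≠ t := fun h => ht (h ▸ hx)
      have := uAux_nonneg h0 a t 0 x
      simp only [reachAux, exitBeforeAux, if_neg hxt, if_neg (not_not_intro hx)]
      linarith
    · have h1' := reachAux_le_one h0 h1 t 0 x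
      have h2' := uAux_nonneg h0 a t 0 x
      simp only [exitBeforeAux, if_pos hx]
      linarith
  | succ n ih =>
    intro x
    by_cases hx : x ∈ C
    · have hxt : x ≠ t := fun h => ht (h ▸ hx)
      by_cases hxa : x = a
      · subst hxa
        have he := exitBeforeAux_nonneg h0 C x (n + 1) x
        have hu : uAux Q x t (n + 1) x = reachAux Q t (n + 1) x := by simp [uAux]
        rw [hu]
        linarith
      · simp only [reachAux, exitBeforeAux, uAux, if_neg hxt, if_neg hxa,
          if_neg (not_not_intro hx)]
        calc (∑ y, Q x y * reachAux Q t n y)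
            ≤ ∑ y, Q x y * (exitBeforeAux Q C a n y + uAux Q a t n y) :=
              Finset.sum_le_sum fun y _ => mul_le_mul_of_nonneg_left (ih y) (h0 x y)
          _ = (∑ y, Q x y * exitBeforeAux Q C a n y) + ∑ y, Q x y * uAux Q a t n y := by
              simp [mul_add, Finset.sum_add_distrib]
    · have h1' := reachAux_le_one h0 h1 t (n + 1) x
      have h2' := uAux_nonneg h0 a t (n + 1) x
      simp only [exitBeforeAux, if_pos hx]
      linarith

/-- The two orderings of first visits are disjoint events. -/
lemma uAux_add_uAux_le_one (h0 : ∀ s s', 0 ≤ Q s s') (h1 : ∀ s, (∑ s', Q s s') = 1) (b b' : S) (hbb' : b ≠ b') :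
    ∀ n m x, uAux Q b b' n x + uAux Q b' b m x ≤ 1 := by
  intro n
  induction n with
  | zero =>
    intro m x
    have h2' := uAux_le_one h0 h1 b' b m x
    have : uAux Q b b' 0 x = 0 := by
      simp only [uAux]
      by_cases hxb : x = b
      · simp [hxb, hbb']
      · simp [hxb]
    linarith
  | succ n ih =>
    intro m x
    by_cases hxb : x = b
    · subst hxb
      have h1' := reachAux_le_one h0 h1 b' (n + 1) x
      have h2' : uAux Q b' x m x = 0 := uAux_at_t (fun h => hbb' h.symm) m
      have hu : uAux Q x b' (n + 1) x = reachAux Q b' (n + 1) x := by simp [uAux]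
      rw [hu]
      linarith
    · by_cases hxb' : x = b'
      · subst hxb'
        have h1' : uAux Q b x (n + 1) x = 0 := uAux_at_t hbb' (n + 1)
        have h2' := uAux_le_one h0 h1 x b m x
        have : uAux Q x b m x = if x = x then reachAux Q b m x else 0 := by
          cases m with
          | zero => simp [uAux, reachAux]
          | succ m => simp [uAux]
        rw [h1']
        linarith [reachAux_le_one h0 h1 b m x, uAux_le_one h0 h1 x b m x]
      · cases m with
        | zero =>
          have h1' := uAux_le_one h0 h1 b b' (n + 1) x
          have : uAux Q b' b 0 x = 0 := by simp [uAux, hxb', hxb]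
          linarith
        | succ m =>
          simp only [uAux, if_neg hxb, if_neg hxb']
          calc (∑ y, Q x y * uAux Q b b' n y) + ∑ y, Q x y * uAux Q b' b m y
              = ∑ y, Q x y * (uAux Q b b' n y + uAux Q b' b m y) := by
                simp [mul_add, Finset.sum_add_distrib]
            _ ≤ ∑ y, Q x y * 1 :=
                Finset.sum_le_sum fun y _ => mul_le_mul_of_nonneg_left (ih m y) (h0 x y)
            _ = 1 := by simp [h1 x]

lemma key_ineq (h0 : ∀ s s', 0 ≤ Q s s') (h1 : ∀ s, (∑ s', Q s s') = 1) (B B' : Set S) (x b b' : S)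
    (hb'B : b' ∉ B) (hbB' : b ∉ B') (hbb' : b ≠ b') :
    ReachProb Q b x + ReachProb Q b' x ≤
      ExitBefore Q B' b' x + ExitBefore Q B b x + 1 := by
  have hUbdd : BddAbove (Set.range fun n => uAux Q b b' n x) := by
    refine ⟨1, ?_⟩; rintro _ ⟨n, rfl⟩; exact uAux_le_one h0 h1 b b' n x
  have hU'bdd : BddAbove (Set.range fun n => uAux Q b' b n x) := by
    refine ⟨1, ?_⟩; rintro _ ⟨n, rfl⟩; exact uAux_le_one h0 h1 b' b n x
  have hEbdd : BddAbove (Set.range fun n => exitBeforeAux Q B b n x) := by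
    refine ⟨1, ?_⟩; rintro _ ⟨n, rfl⟩; exact exitBeforeAux_le_one h0 h1 B b n x
  have hE'bdd : BddAbove (Set.range fun n => exitBeforeAux Q B' b' n x) := by
    refine ⟨1, ?_⟩; rintro _ ⟨n, rfl⟩; exact exitBeforeAux_le_one h0 h1 B' b' n x
  set U : ℝ := ⨆ n, uAux Q b b' n x with hU
  set U' : ℝ := ⨆ n, uAux Q b' b n x with hU'
  have hr1 : ReachProb Q b' x ≤ ExitBefore Q B b x + U := by
    refine ciSup_le fun n => ?_
    refine (reachAux_le_exit_add_u h0 h1 B b b' hb'B n x).trans ?_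
    exact add_le_add (le_ciSup hEbdd n) (le_ciSup hUbdd n)
  have hr2 : ReachProb Q b x ≤ ExitBefore Q B' b' x + U' := by
    refine ciSup_le fun n => ?_
    refine (reachAux_le_exit_add_u h0 h1 B' b' b hbB' n x).trans ?_
    exact add_le_add (le_ciSup hE'bdd n) (le_ciSup hU'bdd n)
  have hUU' : U + U' ≤ 1 := by
    have hstep : ∀ n, uAux Q b b' n x ≤ 1 - U' := by
      intro n
      have : U' ≤ 1 - uAux Q b b' n x := by
        refine ciSup_le fun m => ?_
        linarith [uAux_add_uAux_le_one h0 h1 b b' hbb' n m x]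
      linarith
    have : U ≤ 1 - U' := ciSup_le hstep
    linarith
  linarith

end Aux

/-- The family of communicating classes of a parameterized Markov chain is laminar. -/
theorem commClasses_laminar {S : Type*} [Fintype S] [Nonempty S]
    (P : ℝ → S → S → ℝ) (ε₀ : ℝ) (hε₀ : 0 < ε₀)
    (hP : ∀ ε, 0 < ε → ε < ε₀ →
      (∀ s s', 0 ≤ P ε s s') ∧ ∀ s, (∑ s', P ε s s') = 1)
    (B B' : Set S) (hB : IsCommClass P B) (hB' : IsCommClass P B') :
    B ∩ B' = ∅ ∨ B ⊆ B' ∨ B' ⊆ B := by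
  by_contra h
  push_neg at h
  obtain ⟨hne, hnBB', hnB'B⟩ := h
  obtain ⟨x, hxB, hxB'⟩ := hne
  obtain ⟨b, hbB, hbB'⟩ := Set.not_subset.1 hnBB'
  obtain ⟨b', hb'B', hb'B⟩ := Set.not_subset.1 hnB'B
  have hbb' : b ≠ b' := fun h => hbB' (h ▸ hb'B')
  have hRb : Tendsto (fun ε => ReachProb (P ε) b x) (nhdsWithin 0 (Set.Ioi 0)) (nhds 1) :=
    (hB.2 x hxB b hbB).2
  have hRb' : Tendsto (fun ε => ReachProb (P ε) b' x) (nhdsWithin 0 (Set.Ioi 0)) (nhds 1) :=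
    (hB'.2 x hxB' b' hb'B').2
  have hEb : Tendsto (fun ε => ExitBefore (P ε) B b x) (nhdsWithin 0 (Set.Ioi 0)) (nhds 0) :=
    (hB.2 x hxB b hbB).1
  have hEb' : Tendsto (fun ε => ExitBefore (P ε) B' b' x) (nhdsWithin 0 (Set.Ioi 0)) (nhds 0) :=
    (hB'.2 x hxB' b' hb'B').1
  have hev : ∀ᶠ ε in nhdsWithin (0:ℝ) (Set.Ioi 0),
      ReachProb (P ε) b x + ReachProb (P ε) b' x ≤
        ExitBefore (P ε) B' b' x + ExitBefore (P ε) B b x + 1 := by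
    filter_upwards [Ioo_mem_nhdsGT_of_mem (Set.left_mem_Ico.2 hε₀)] with ε hε
    exact key_ineq (hP ε hε.1 hε.2).1 (hP ε hε.1 hε.2).2 B B' x b b' hb'B hbB' hbb'
  have hle : (1 : ℝ) + 1 ≤ 0 + 0 + 1 :=
    le_of_tendsto_of_tendsto (hRb.add hRb') ((hEb'.add hEb).add tendsto_const_nhds) hev
  linarith
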